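/- Let G be a finitely generated group with finite generating set A, S = A ∪ A⁻¹, and let L ⊆ S* be a regular language such that π : L → G is surjective. Assume there is a constant C₀ such that for every w₁, w₂ ∈ L and a ∈ A for which π(w₁)·a = π(w₂), the paths ŵ₁ and ŵ₂ are a uniform distance at most C₀ apart, i.e., d_A(π(w₁(t)), π(w₂(t))) ≤ C₀ for all non-negative integers t, where w(t) denotes the prefix of w of length t (and w(t) = w if t > |w|). Then G is an automatic group. -/

import Mathlib

namespace CAG

/-- The convolution `w₁ ⊗ w₂` of two words, over the padded alphabet
`(Σ ∪ {⋄})²`, modelled as `Option α × Option α` where `none` is the padding symbol `⋄`. -/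
def conv {α : Type*} : List α → List α → List (Option α × Option α)
  | [], [] => []
  | a :: as, [] => (some a, none) :: conv as []
  | [], b :: bs => (none, some b) :: conv [] bs
  | a :: as, b :: bs => (some a, some b) :: conv as bs

/-- A binary relation on words is regular if the language of convolutions of its pairs
is a regular language. -/
def IsRegularRel {α : Type*} (R : Set (List α × List α)) : Prop :=
  Language.IsRegular {w | ∃ p ∈ R, w = conv p.1 p.2}

variable {G : Type*} [Group G]

/-- The alphabet `S = A ∪ A⁻¹` associated to a generating set `A ⊆ G`. -/
def Alph (A : Set G) : Type _ := {x : G // x ∈ A ∪ A⁻¹}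

/-- The canonical evaluation map `π : S* → G`. -/
def eval (A : Set G) (w : List (Alph A)) : G := (w.map Subtype.val).prod

/-- The word length `d_A(g)` of `g` with respect to the generating set `A`. -/
noncomputable def wordLength (A : Set G) (g : G) : ℕ :=
  sInf {n | ∃ w : List (Alph A), eval A w = g ∧ w.length = n}

/-- The distance `d_A(g₁, g₂)` in the Cayley graph of `G` with respect to `A`. -/
noncomputable def cayleyDist (A : Set G) (g₁ g₂ : G) : ℕ := wordLength A (g₁⁻¹ * g₂)

/-- `ψ : L → G` is a Cayley automatic representation of `G` (w.r.t. the
generating set `A`): `L ⊆ S*` is regular, `ψ` is a bijection from `L` onto `G`, and for every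
`a ∈ A` the relation `R_a = {(ψ⁻¹(g), ψ⁻¹(g·a)) : g ∈ G}` is regular. -/
def IsCayleyAutomaticRep (A : Set G) (L : Language (Alph A)) (ψ : List (Alph A) → G) : Prop :=
  Language.IsRegular L ∧ Set.BijOn ψ L Set.univ ∧
    ∀ a ∈ A, IsRegularRel {p : List (Alph A) × List (Alph A) |
      p.1 ∈ L ∧ p.2 ∈ L ∧ ψ p.2 = ψ p.1 * a}

/-- `G` is Cayley automatic with respect to the generating set `A`. -/
def IsCayleyAutomatic (A : Set G) : Prop :=
  ∃ (L : Language (Alph A)) (ψ : List (Alph A) → G), IsCayleyAutomaticRep A L ψ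

/-- `G` is automatic (in the sense of Thurston) with respect to the generating set `A`:
there is a regular language `L ⊆ S*` on which the canonical evaluation map `π` is a bijection
onto `G` and all the relations `R_a`, `a ∈ A`, are regular. -/
def IsAutomatic (A : Set G) : Prop :=
  ∃ L : Language (Alph A), IsCayleyAutomaticRep A L (eval A)

/-- The family `𝔉` of non-decreasing, non-negative real valued functions defined on a
final segment `[Q, ∞)` of `ℕ` (values below `Q` are irrelevant junk values). -/
structure FFun where
  Q : ℕ
  toFun : ℕ → ℝ
  nonneg : ∀ n, Q ≤ n → 0 ≤ toFun n
  mono : ∀ m n, Q ≤ m → m ≤ n → toFun m ≤ toFun n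

/-- `h ⪯ f` : there are positive integers `K, M, N`, with `[N,∞)` contained in the domains of
`h` and `f`, such that `h(n) ≤ K·f(M·n)` for all `n ≥ N`. -/
def FFun.Preceq (h f : FFun) : Prop :=
  ∃ K M N : ℕ, 0 < K ∧ 0 < M ∧ 0 < N ∧ h.Q ≤ N ∧ f.Q ≤ N ∧
    ∀ n, N ≤ n → h.toFun n ≤ K * f.toFun (M * n)

/-- `h ≍ f` iff `h ⪯ f` and `f ⪯ h`. -/
def FFun.Equiv (h f : FFun) : Prop := h.Preceq f ∧ f.Preceq h

/-- `h ≺ f` iff `h ⪯ f` and not `h ≍ f`. -/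
def FFun.Prec (h f : FFun) : Prop := h.Preceq f ∧ ¬ h.Equiv f

/-- `G ∈ ℬ_f` with respect to the generating set `A`: there is a Cayley automatic
representation `ψ : L → G` such that the function
`h(n) = max{d_A(π(w), ψ(w)) : w ∈ L, |w| ≤ n}` satisfies `h ⪯ f`
(stated equivalently: for some positive `K, M, N` with `N ≥ Q_f`, every `w ∈ L` with `|w| ≤ n`
and `n ≥ N` satisfies `d_A(π(w), ψ(w)) ≤ K·f(M·n)`). -/
def InB (A : Set G) (f : FFun) : Prop :=
  ∃ (L : Language (Alph A)) (ψ : List (Alph A) → G),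
    IsCayleyAutomaticRep A L ψ ∧
    ∃ K M N : ℕ, 0 < K ∧ 0 < M ∧ 0 < N ∧ f.Q ≤ N ∧
      ∀ n, N ≤ n → ∀ w ∈ L, w.length ≤ n →
        (cayleyDist A (eval A w) (ψ w) : ℝ) ≤ K * f.toFun (M * n)

/-- The identity function `𝔦(n) = n` as an element of `𝔉`. -/
def identF : FFun where
  Q := 1
  toFun n := n
  nonneg n _ := by positivity
  mono m n _ h := by simpa using (Nat.cast_le (α := ℝ)).mpr h

/-- The exponential function `𝔢(n) = exp n` as an element of `𝔉`. -/
noncomputable def expF : FFun where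
  Q := 1
  toFun n := Real.exp n
  nonneg n _ := (Real.exp_pos n).le
  mono m n _ h := Real.exp_le_exp.mpr (by exact_mod_cast h)

end CAG

/-!
Reading the convolution of two words `w₁, w₂` letter by letter, one can keep track of the word
difference `π(w₁(t))⁻¹ π(w₂(t))`. This automaton has infinitely many states, but on
fellow-travelling pairs its runs stay in a finite ball of the Cayley graph, so its restriction to
that ball is a finite automaton recognising the pairs of words of a regular language with a
prescribed value of `π(w₁)⁻¹ π(w₂)`. Two words of `L` with the same value fellow travel at distance
`2 C₀` through a common neighbour, so equality on `L` is a regular relation. Keeping only the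
shortlex-least representative of each element then gives a regular language, since the other words
form the projection of a regular relation; on it the evaluation map is bijective, and the
multiplier relations are regular by the word-difference argument.
-/

namespace Language

variable {α β : Type*}

theorem IsRegular.preimage_filterMap {L : Language β} (h : L.IsRegular) (f : α → Option β) :
    Language.IsRegular {u : List α | u.filterMap f ∈ L} := by
  refine .of_finite_range_leftQuotient <| (h.finite_range_leftQuotient.image
    fun Q : Language β => ({u | u.filterMap f ∈ Q} : Language α)).subset ?_
  rintro _ ⟨x, rfl⟩
  refine ⟨L.leftQuotient (x.filterMap f), ⟨_, rfl⟩, ?_⟩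
  ext y
  exact (congrArg (· ∈ L) (List.filterMap_append ..)).to_iff.symm

/-- The left quotient of the image at `x` only depends on the set of left quotients of `L` at the
words that `f` maps to `x`, and there are finitely many such sets. -/
theorem IsRegular.image_filterMap {L : Language α} (h : L.IsRegular) (f : α → Option β) :
    Language.IsRegular {y : List β | ∃ u ∈ L, u.filterMap f = y} := by
  let imageOfQuotients : Set (Language α) → Language β :=
    fun S => {y | ∃ Q ∈ S, ∃ z ∈ Q, z.filterMap f = y}
  refine .of_finite_range_leftQuotient <|
    (h.finite_range_leftQuotient.finite_subsets.image imageOfQuotients).subset ?_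
  rintro _ ⟨x, rfl⟩
  refine ⟨{Q | ∃ u, u.filterMap f = x ∧ Q = L.leftQuotient u}, ?_, ?_⟩
  · rintro _ ⟨u, -, rfl⟩
    exact ⟨u, rfl⟩
  · ext y
    constructor
    · rintro ⟨_, ⟨u, hu, rfl⟩, z, hz, rfl⟩
      exact ⟨u ++ z, hz, by simp [hu]⟩
    · rintro ⟨w, hw, hwxy⟩
      obtain ⟨u, z, rfl, hu, hz⟩ := List.filterMap_eq_append_iff.mp hwxy
      exact ⟨_, ⟨u, hu, rfl⟩, z, hw, hz⟩

end Language

theorem List.forall_take_append {α : Type*} {p : List α → Prop} {x y : List α} :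
    (∀ t, p ((x ++ y).take t)) ↔ (∀ t, p (x.take t)) ∧ ∀ t, p (x ++ y.take t) := by
  refine ⟨fun h => ⟨fun t => ?_, fun t => ?_⟩, fun ⟨hx, hy⟩ t => ?_⟩
  · rcases le_total t x.length with ht | ht
    · simpa [List.take_append_of_le_length ht] using h t
    · simpa [List.take_of_length_le ht] using h x.length
  · simpa [List.take_length_add_append] using h (x.length + t)
  · rcases le_total t x.length with ht | ht
    · simpa [List.take_append_of_le_length ht] using hx t
    · simpa [List.take_append, List.take_of_length_le ht] using hy (t - x.length)

theorem List.compareLex_compare_eq_lt_iff {α : Type*} [LinearOrder α] (v w : List α) :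
    v.compareLex compare w = .lt ↔ List.Lex (· < ·) v w := by
  induction v generalizing w with
  | nil => cases w <;> simp [List.compareLex_nil_nil, List.compareLex_nil_cons]
  | cons a v ih =>
    cases w with
    | nil => simp [List.compareLex_cons_nil]
    | cons b w =>
      rw [List.compareLex_cons_cons, Ordering.then_eq_lt, ih, List.cons_lex_cons_iff,
        compare_lt_iff_lt, compare_eq_iff_eq]

theorem bijOn_fiberwise_minimal {α β : Type*} {r : α → α → Prop} [Std.Trichotomous r]
    (hr : WellFounded r) {f : α → β} {s : Set α} (hs : Set.SurjOn f s Set.univ) :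
    Set.BijOn f {x | x ∈ s ∧ ∀ y ∈ s, f y = f x → ¬ r y x} Set.univ := by
  refine ⟨Set.mapsTo_univ _ _, fun x hx y hy hxy => ?_, fun b _ => ?_⟩
  · rcases trichotomous_of r x y with h | h | h
    · exact absurd h (hy.2 x hx.1 hxy)
    · exact h
    · exact absurd h (hx.2 y hy.1 hxy.symm)
  · obtain ⟨x, ⟨hxs, rfl⟩, hmin⟩ := hr.has_min {x | x ∈ s ∧ f x = b} (hs (Set.mem_univ b))
    exact ⟨x, ⟨hxs, fun y hys hy => hmin y ⟨hys, hy⟩⟩, rfl⟩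

namespace DFA

variable {α σ : Type*} (M : DFA α σ)

def acceptsWithin (B : Set σ) : Language α :=
  {u | u ∈ M.accepts ∧ ∀ t, M.eval (u.take t) ∈ B}

theorem mem_acceptsWithin {B : Set σ} {u : List α} :
    u ∈ M.acceptsWithin B ↔ M.eval u ∈ M.accept ∧ ∀ t, M.eval (u.take t) ∈ B := Iff.rfl

/-- The left quotient at `x` is empty or determined by the state reached after `x`, which then
lies in `B`; so this holds for any state space. -/
theorem isRegular_acceptsWithin {B : Set σ} (hB : B.Finite) : (M.acceptsWithin B).IsRegular := by
  let acceptsFromWithin : σ → Language α :=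
    fun s => ({ M with start := s } : DFA α σ).acceptsWithin B
  refine .of_finite_range_leftQuotient <| ((hB.image acceptsFromWithin).insert 0).subset ?_
  rintro _ ⟨x, rfl⟩
  have hquot : ∀ y, y ∈ (M.acceptsWithin B).leftQuotient x ↔
      (∀ t, M.eval (x.take t) ∈ B) ∧ y ∈ acceptsFromWithin (M.eval x) := by
    intro y
    change M.eval (x ++ y) ∈ M.accept ∧ (∀ t, M.eval ((x ++ y).take t) ∈ B) ↔ _
    rw [List.forall_take_append (p := fun v => M.eval v ∈ B)]
    simp only [eval, evalFrom_of_append]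
    exact ⟨fun ⟨h, hx, hy⟩ => ⟨hx, h, hy⟩, fun ⟨hx, h, hy⟩ => ⟨h, hx, hy⟩⟩
  by_cases hx : ∀ t, M.eval (x.take t) ∈ B
  · refine Or.inr ⟨M.eval x, by simpa using hx x.length, ?_⟩
    ext y
    simp [hquot, hx]
  · refine Or.inl ?_
    ext y
    simp [hquot, hx]

end DFA

namespace CAG

section Convolution

variable {α β : Type*}

@[simp] theorem filterMap_fst_conv (v w : List α) : (conv v w).filterMap Prod.fst = v := by
  induction v, w using conv.induct <;> simp [conv, *]

@[simp] theorem filterMap_snd_conv (v w : List α) : (conv v w).filterMap Prod.snd = w := by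
  induction v, w using conv.induct <;> simp [conv, *]

theorem conv_injective : Function.Injective fun p : List α × List α => conv p.1 p.2 :=
  fun p q h => Prod.ext (by simpa using congrArg (List.filterMap Prod.fst) h)
    (by simpa using congrArg (List.filterMap Prod.snd) h)

theorem take_conv (v w : List α) (t : ℕ) : (conv v w).take t = conv (v.take t) (w.take t) := by
  induction v, w using conv.induct generalizing t <;> cases t <;> simp [conv, *]

/-- In the state `some (e₁, e₂)`, `eᵢ` records that the `i`-th word has already ended; `none` is
the dead state. -/
def convDFA (α : Type*) : DFA (Option α × Option α) (Option (Bool × Bool)) where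
  step s c := s.bind fun e =>
    if (c.1.isSome || c.2.isSome) && !(e.1 && c.1.isSome) && !(e.2 && c.2.isSome) then
      some (c.1.isNone, c.2.isNone)
    else none
  start := some (false, false)
  accept := {s | s.isSome}

theorem convDFA_step_some (e : Bool × Bool) (c : Option α × Option α) :
    (convDFA α).step (some e) c =
      if (c.1.isSome || c.2.isSome) && !(e.1 && c.1.isSome) && !(e.2 && c.2.isSome) then
        some (c.1.isNone, c.2.isNone)
      else none := rfl

theorem convDFA_evalFrom_none (u : List (Option α × Option α)) :
    (convDFA α).evalFrom none u = none := by
  induction u with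
  | nil => rfl
  | cons c u ih => exact ih

theorem isSome_convDFA_evalFrom_conv (v w : List α) (e : Bool × Bool) (h₁ : e.1 → v = [])
    (h₂ : e.2 → w = []) : ((convDFA α).evalFrom (some e) (conv v w)).isSome := by
  induction v, w using conv.induct generalizing e <;> obtain ⟨_ | _, _ | _⟩ := e <;>
    simp_all [conv, DFA.evalFrom_cons, convDFA_step_some]

theorem exists_eq_conv_of_isSome_convDFA_evalFrom (u : List (Option α × Option α))
    (e : Bool × Bool) (h : ((convDFA α).evalFrom (some e) u).isSome) :
    ∃ v w, u = conv v w ∧ (e.1 → v = []) ∧ (e.2 → w = []) := by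
  induction u generalizing e with
  | nil => exact ⟨[], [], by simp [conv], fun _ => rfl, fun _ => rfl⟩
  | cons c u ih =>
    rw [DFA.evalFrom_cons, convDFA_step_some] at h
    split_ifs at h with hc
    · obtain ⟨v, w, rfl, h₁, h₂⟩ := ih _ h
      refine ⟨c.1.toList ++ v, c.2.toList ++ w, ?_⟩
      obtain ⟨_ | a, _ | b⟩ := c <;> obtain ⟨_ | _, _ | _⟩ := e <;> simp_all [conv]
    · simp [convDFA_evalFrom_none] at h

theorem isRegularRel_univ : IsRegularRel (Set.univ : Set (List α × List α)) := by
  refine ⟨_, inferInstance, convDFA α, ?_⟩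
  ext u
  refine ⟨fun h => ?_, ?_⟩
  · obtain ⟨v, w, rfl, -⟩ := exists_eq_conv_of_isSome_convDFA_evalFrom u (false, false) h
    exact ⟨(v, w), trivial, rfl⟩
  · rintro ⟨⟨v, w⟩, -, rfl⟩
    exact isSome_convDFA_evalFrom_conv v w (false, false) nofun nofun

theorem isRegularRel_setOf_conv_mem {K : Language (Option α × Option α)} (hK : K.IsRegular) :
    IsRegularRel {p : List α × List α | conv p.1 p.2 ∈ K} := by
  refine (congrArg Language.IsRegular ?_).mpr (isRegularRel_univ.inf hK)
  ext u
  constructor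
  · rintro ⟨p, hp, rfl⟩
    exact ⟨⟨p, trivial, rfl⟩, hp⟩
  · rintro ⟨⟨p, -, rfl⟩, hp⟩
    exact ⟨p, hp, rfl⟩

theorem IsRegularRel.inter {R S : Set (List α × List α)} (hR : IsRegularRel R)
    (hS : IsRegularRel S) : IsRegularRel (R ∩ S) := by
  refine (congrArg Language.IsRegular ?_).mpr (hR.inf hS)
  ext u
  constructor
  · rintro ⟨p, ⟨hpR, hpS⟩, rfl⟩
    exact ⟨⟨p, hpR, rfl⟩, ⟨p, hpS, rfl⟩⟩
  · rintro ⟨⟨p, hpR, rfl⟩, ⟨q, hqS, hpq⟩⟩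
    obtain rfl := conv_injective hpq
    exact ⟨p, ⟨hpR, hqS⟩, rfl⟩

theorem isRegularRel_prod {L₁ L₂ : Language α} (h₁ : L₁.IsRegular) (h₂ : L₂.IsRegular) :
    IsRegularRel {p : List α × List α | p.1 ∈ L₁ ∧ p.2 ∈ L₂} := by
  convert isRegularRel_setOf_conv_mem ((h₁.preimage_filterMap Prod.fst).inf
    (h₂.preimage_filterMap Prod.snd)) using 1
  ext ⟨v, w⟩
  exact and_congr (by simp) (by simp)

theorem IsRegularRel.isRegular_image_snd {R : Set (List α × List α)} (hR : IsRegularRel R) :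
    Language.IsRegular {w | ∃ v, (v, w) ∈ R} := by
  refine (congrArg Language.IsRegular ?_).mpr (Language.IsRegular.image_filterMap hR Prod.snd)
  ext w
  constructor
  · rintro ⟨v, hv⟩
    exact ⟨conv v w, ⟨(v, w), hv, rfl⟩, filterMap_snd_conv v w⟩
  · rintro ⟨_, ⟨⟨v, w⟩, hvw, rfl⟩, rfl⟩
    exact ⟨v, by simpa using hvw⟩

/-- The state is the lexicographic comparison of what has been read; a padding letter settles the
comparison by length. -/
def shortlexDFA (α : Type*) [LinearOrder α] : DFA (Option α × Option α) Ordering where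
  step o
    | (some a, some b) => o.then (compare a b)
    | (some _, none) => .gt
    | (none, some _) => .lt
    | (none, none) => o
  start := .eq
  accept := {.lt}

theorem shortlexDFA_evalFrom_conv [LinearOrder α] (v w : List α) (o : Ordering) :
    (shortlexDFA α).evalFrom o (conv v w) =
      if v.length = w.length then o.then (v.compareLex compare w)
      else if v.length < w.length then .lt else .gt := by
  induction v, w using conv.induct generalizing o with
  | case1 => simp [conv, List.compareLex_nil_nil]
  | case2 a v ih =>
    rw [conv, DFA.evalFrom_cons]
    exact (ih .gt).trans (by simp)
  | case3 b w ih =>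
    rw [conv, DFA.evalFrom_cons]
    exact (ih .lt).trans (by cases w <;> simp)
  | case4 a v b w ih =>
    rw [conv, DFA.evalFrom_cons]
    exact (ih (o.then (compare a b))).trans
      (by simp [List.compareLex_cons_cons, Ordering.then_assoc])

theorem conv_mem_shortlexDFA_accepts [LinearOrder α] (v w : List α) :
    conv v w ∈ (shortlexDFA α).accepts ↔ List.Shortlex (· < ·) v w := by
  rw [DFA.mem_accepts, DFA.eval, shortlexDFA_evalFrom_conv, List.shortlex_def]
  change (if _ then Ordering.eq.then _ else _) = Ordering.lt ↔ _
  split_ifs with h₁ h₂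
  · simp [h₁, List.compareLex_compare_eq_lt_iff]
  · simp [h₂]
  · simp only [false_iff]
    omega

theorem isRegularRel_shortlex [LinearOrder α] :
    IsRegularRel {p : List α × List α | List.Shortlex (· < ·) p.1 p.2} := by
  convert isRegularRel_setOf_conv_mem (K := (shortlexDFA α).accepts) ⟨_, inferInstance, _, rfl⟩
    using 1
  ext ⟨v, w⟩
  exact (conv_mem_shortlexDFA_accepts v w).symm

theorem isRegular_shortlexMinimal [LinearOrder α] {L : Language α} (hL : L.IsRegular)
    (f : List α → β) (hE : IsRegularRel {p : List α × List α | p.1 ∈ L ∧ p.2 ∈ L ∧ f p.2 = f p.1}) :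
    Language.IsRegular {w | w ∈ L ∧ ∀ v ∈ L, f v = f w → ¬ List.Shortlex (· < ·) v w} := by
  refine (congrArg Language.IsRegular ?_).mpr
    (hL.inf (hE.inter isRegularRel_shortlex).isRegular_image_snd.compl)
  ext w
  constructor
  · rintro ⟨hw, hmin⟩
    refine ⟨hw, ?_⟩
    rintro ⟨v, ⟨hv, -, hvw⟩, hlt⟩
    exact hmin v hv hvw.symm hlt
  · rintro ⟨hw, hmin⟩
    exact ⟨hw, fun v hv hvw hlt => hmin ⟨v, ⟨hv, hw, hvw.symm⟩, hlt⟩⟩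

end Convolution

section WordDifference

variable {G : Type*} [Group G] {A : Set G}

@[simp] theorem eval_nil : eval A [] = 1 := rfl

@[simp] theorem eval_append (v w : List (Alph A)) : eval A (v ++ w) = eval A v * eval A w :=
  (congrArg List.prod List.map_append).trans List.prod_append

def invLetter (a : Alph A) : Alph A :=
  ⟨a.1⁻¹, a.2.symm.imp (fun h => by simpa using h) (fun h => by simpa using h)⟩

theorem eval_reverse_map_invLetter (w : List (Alph A)) :
    eval A (w.map invLetter).reverse = (eval A w)⁻¹ := by
  induction w with
  | nil => exact inv_one.symm
  | cons a w ih =>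
    rw [List.map_cons, List.reverse_cons, eval_append, ih]
    exact (congrArg _ (mul_one _)).trans (mul_inv_rev a.1 (eval A w)).symm

theorem exists_eval_eq (hA : Subgroup.closure A = ⊤) (g : G) :
    ∃ w : List (Alph A), eval A w = g := by
  induction (hA ▸ Subgroup.mem_top g : g ∈ Subgroup.closure A) using Subgroup.closure_induction with
  | mem x hx => exact ⟨[⟨x, Or.inl hx⟩], mul_one x⟩
  | one => exact ⟨[], rfl⟩
  | mul x y _ _ hx hy =>
    obtain ⟨v, rfl⟩ := hx
    obtain ⟨w, rfl⟩ := hy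
    exact ⟨v ++ w, eval_append v w⟩
  | inv x _ hx =>
    obtain ⟨w, rfl⟩ := hx
    exact ⟨_, eval_reverse_map_invLetter w⟩

def wordBall (A : Set G) (C : ℕ) : Set G :=
  {g | ∃ w : List (Alph A), eval A w = g ∧ w.length ≤ C}

theorem finite_wordBall (hA : A.Finite) (C : ℕ) : (wordBall A C).Finite := by
  have : Finite (Alph A) := (hA.union hA.inv).to_subtype
  exact ((List.finite_length_le _ C).image (eval A)).subset fun _ ⟨w, hw, hC⟩ => ⟨w, hC, hw⟩

theorem one_mem_wordBall (C : ℕ) : (1 : G) ∈ wordBall A C := ⟨[], rfl, Nat.zero_le C⟩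

theorem mul_mem_wordBall {g h : G} {C D : ℕ} (hg : g ∈ wordBall A C) (hh : h ∈ wordBall A D) :
    g * h ∈ wordBall A (C + D) := by
  obtain ⟨v, rfl, hv⟩ := hg
  obtain ⟨w, rfl, hw⟩ := hh
  exact ⟨v ++ w, eval_append v w, by simp; omega⟩

theorem inv_mem_wordBall {g : G} {C : ℕ} (hg : g ∈ wordBall A C) : g⁻¹ ∈ wordBall A C := by
  obtain ⟨w, rfl, hw⟩ := hg
  exact ⟨_, eval_reverse_map_invLetter w, by simpa using hw⟩

/-- Without `hA` the word length of an element outside the generated subgroup would be the junk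
value `sInf ∅ = 0`. -/
theorem mem_wordBall_of_cayleyDist_le (hA : Subgroup.closure A = ⊤) {g₁ g₂ : G} {C : ℕ}
    (h : cayleyDist A g₁ g₂ ≤ C) : g₁⁻¹ * g₂ ∈ wordBall A C := by
  have hne : {n | ∃ w : List (Alph A), eval A w = g₁⁻¹ * g₂ ∧ w.length = n}.Nonempty := by
    obtain ⟨w, hw⟩ := exists_eval_eq hA (g₁⁻¹ * g₂)
    exact ⟨_, w, hw, rfl⟩
  obtain ⟨w, hw, hlen⟩ := Nat.sInf_mem hne
  exact ⟨w, hw, hlen ▸ h⟩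

def FellowTravel (A : Set G) (C : ℕ) (w₁ w₂ : List (Alph A)) : Prop :=
  ∀ t, (eval A (w₁.take t))⁻¹ * eval A (w₂.take t) ∈ wordBall A C

theorem FellowTravel.refl (C : ℕ) (w : List (Alph A)) : FellowTravel A C w w := fun t => by
  simpa using one_mem_wordBall C

theorem FellowTravel.symm {C : ℕ} {w₁ w₂ : List (Alph A)} (h : FellowTravel A C w₁ w₂) :
    FellowTravel A C w₂ w₁ := fun t => by
  simpa using inv_mem_wordBall (h t)

theorem FellowTravel.trans {C D : ℕ} {w₁ w₂ w₃ : List (Alph A)} (h₁₂ : FellowTravel A C w₁ w₂)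
    (h₂₃ : FellowTravel A D w₂ w₃) : FellowTravel A (C + D) w₁ w₃ := fun t => by
  simpa [mul_assoc] using mul_mem_wordBall (h₁₂ t) (h₂₃ t)

theorem fellowTravel_of_eval_eq {L : Language (Alph A)} (hsurj : ∀ g : G, ∃ w ∈ L, eval A w = g)
    {C : ℕ} (hft : ∀ w₁ ∈ L, ∀ w₂ ∈ L, ∀ a ∈ A, eval A w₁ * a = eval A w₂ → FellowTravel A C w₁ w₂)
    {w₁ w₂ : List (Alph A)} (h₁ : w₁ ∈ L) (h₂ : w₂ ∈ L) (heq : eval A w₁ = eval A w₂) :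
    FellowTravel A (C + C) w₁ w₂ := by
  rcases A.eq_empty_or_nonempty with rfl | ⟨a, ha⟩
  · have : IsEmpty (Alph (∅ : Set G)) := ⟨fun x => by simpa using x.2⟩
    exact Subsingleton.elim w₁ w₂ ▸ FellowTravel.refl _ w₁
  · obtain ⟨w₃, h₃, hw₃⟩ := hsurj (eval A w₁ * a)
    exact (hft w₁ h₁ w₃ h₃ a ha hw₃.symm).trans (hft w₂ h₂ w₃ h₃ a ha (heq ▸ hw₃.symm)).symm

def diffDFA (A : Set G) (z : G) : DFA (Option (Alph A) × Option (Alph A)) G where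
  step g c := (eval A c.1.toList)⁻¹ * g * eval A c.2.toList
  start := 1
  accept := {z}

theorem diffDFA_eval (z : G) (u : List (Option (Alph A) × Option (Alph A))) :
    (diffDFA A z).eval u = (eval A (u.filterMap Prod.fst))⁻¹ * eval A (u.filterMap Prod.snd) := by
  induction u using List.reverseRecOn with
  | nil => simp [diffDFA]
  | append_singleton u c ih =>
    rw [DFA.eval_append_singleton, ih]
    obtain ⟨_ | a, _ | b⟩ := c <;> simp [diffDFA, mul_assoc]

theorem isRegularRel_fellowTravel (hA : A.Finite) (C : ℕ) (z : G) :
    IsRegularRel {p : List (Alph A) × List (Alph A) |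
      eval A p.2 = eval A p.1 * z ∧ FellowTravel A C p.1 p.2} := by
  refine (congrArg IsRegularRel ?_).mpr
    (isRegularRel_setOf_conv_mem ((diffDFA A z).isRegular_acceptsWithin (finite_wordBall hA C)))
  ext ⟨v, w⟩
  change _ ↔ conv v w ∈ (diffDFA A z).acceptsWithin (wordBall A C)
  simp only [DFA.mem_acceptsWithin, take_conv, diffDFA_eval, filterMap_fst_conv,
    filterMap_snd_conv]
  exact and_congr inv_mul_eq_iff_eq_mul.symm Iff.rfl

theorem isRegularRel_of_fellowTravel (hA : A.Finite) {L₁ L₂ : Language (Alph A)}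
    (h₁ : L₁.IsRegular) (h₂ : L₂.IsRegular) (C : ℕ) (z : G)
    (hft : ∀ w₁ ∈ L₁, ∀ w₂ ∈ L₂, eval A w₂ = eval A w₁ * z → FellowTravel A C w₁ w₂) :
    IsRegularRel {p : List (Alph A) × List (Alph A) |
      p.1 ∈ L₁ ∧ p.2 ∈ L₂ ∧ eval A p.2 = eval A p.1 * z} := by
  refine (congrArg IsRegularRel ?_).mpr
    ((isRegularRel_prod h₁ h₂).inter (isRegularRel_fellowTravel hA C z))
  ext ⟨v, w⟩
  exact ⟨fun ⟨hv, hw, hz⟩ => ⟨⟨hv, hw⟩, hz, hft v hv w hw hz⟩,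
    fun ⟨⟨hv, hw⟩, hz, _⟩ => ⟨hv, hw, hz⟩⟩

end WordDifference

end CAG

open CAG in
/-- If `L ⊆ S*` is a regular language such that `π : L → G` is surjective and there is a
constant `C₀` such that for every `w₁, w₂ ∈ L` and `a ∈ A` with `π(w₁)·a = π(w₂)` the paths
`ŵ₁` and `ŵ₂` are a uniform distance at most `C₀` apart (i.e.
`d_A(π(w₁(t)), π(w₂(t))) ≤ C₀` for all non-negative integers `t`, where `w(t)` is the prefix
of `w` of length `t`, and `w(t) = w` for `t > |w|`), then `G` is an automatic group. -/
theorem automatic_of_fellow_traveller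
    (G : Type*) [Group G] (A : Set G) (hAfin : A.Finite)
    (hAgen : Subgroup.closure A = ⊤)
    (L : Language (Alph A)) (hL : Language.IsRegular L)
    (hsurj : ∀ g : G, ∃ w ∈ L, eval A w = g)
    (C₀ : ℕ)
    (hft : ∀ w₁ ∈ L, ∀ w₂ ∈ L, ∀ a ∈ A, eval A w₁ * a = eval A w₂ →
        ∀ t : ℕ, cayleyDist A (eval A (w₁.take t)) (eval A (w₂.take t)) ≤ C₀) :
    IsAutomatic A := by
  let _ : LinearOrder (Alph A) := IsWellOrder.linearOrder WellOrderingRel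
  have : Finite (Alph A) := (hAfin.union hAfin.inv).to_subtype
  have hft' : ∀ w₁ ∈ L, ∀ w₂ ∈ L, ∀ a ∈ A, eval A w₁ * a = eval A w₂ → FellowTravel A C₀ w₁ w₂ :=
    fun w₁ h₁ w₂ h₂ a ha h t => mem_wordBall_of_cayleyDist_le hAgen (hft w₁ h₁ w₂ h₂ a ha h t)
  have hE : IsRegularRel {p | p.1 ∈ L ∧ p.2 ∈ L ∧ eval A p.2 = eval A p.1} := by
    simpa only [mul_one] using isRegularRel_of_fellowTravel hAfin hL hL (C₀ + C₀) 1
      fun w₁ h₁ w₂ h₂ h => fellowTravel_of_eval_eq hsurj hft' h₁ h₂ (by simpa using h.symm)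
  have hL' := isRegular_shortlexMinimal hL (eval A) hE
  refine ⟨_, hL', bijOn_fiberwise_minimal (List.Shortlex.wf wellFounded_lt) fun g _ => hsurj g,
    fun a ha => ?_⟩
  exact isRegularRel_of_fellowTravel hAfin hL' hL' C₀ a
    fun w₁ h₁ w₂ h₂ h => hft' w₁ h₁.1 w₂ h₂.1 a ha h.symm
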